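/- Let C : ℕ → Set ℕ be a family of subsets of ℕ. Define a partial order P with underlying set consisting of: a bottom element ⊥, a top element ⊤, elements aₙ and bₙ for each n : ℕ, and elements cₙₖ for each n : ℕ and k ∈ C n. The order is generated by: ⊥ below everything, ⊤ above everything, cₙₖ < cₙₗ whenever k < l (k, l ∈ C n), cₙₖ < aₙ and cₙₖ < bₙ for all k ∈ C n, and no other strict relations (in particular aₙ, bₙ and all elements with different first index n are pairwise incomparable except through ⊥ and ⊤). Then P is a lattice (every two elements have a least upper bound and a greatest lower bound) if and only if C n is finite for every n. -/
import Mathlib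


/-- Underlying names of elements of the poset: `⊥`, `⊤`, `aₙ`, `bₙ`, `cₙₖ`. -/
inductive Base
  | bot | top | a (n : ℕ) | b (n : ℕ) | c (n k : ℕ)
deriving DecidableEq

/-- The order: `⊥` below everything, `⊤` above everything, `cₙₖ ≤ cₙₗ` iff `k ≤ l`,
`cₙₖ` below `aₙ` and `bₙ`, and nothing else besides reflexivity. -/
def leB : Base → Base → Prop
  | .bot, _ => True
  | _, .top => True
  | .top, _ => False
  | _, .bot => False
  | .a n, .a m => n = m
  | .a _, _ => False
  | .b n, .b m => n = m
  | .b _, _ => False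
  | .c n k, .c m l => n = m ∧ k ≤ l
  | .c n _, .a m => n = m
  | .c n _, .b m => n = m

instance : PartialOrder Base where
  le := leB
  le_refl x := by cases x <;> simp [leB]
  le_trans x y z hxy hyz := by
    cases x <;> cases y <;> cases z <;> simp only [leB] at hxy hyz ⊢ <;>
      first
      | trivial
      | exact hxy.elim
      | exact hyz.elim
      | omega
  le_antisymm x y hxy hyx := by
    cases x <;> cases y <;> simp_all [leB] <;> omega

/-- The carrier of the poset `P` associated to the family `C`: elements `cₙₖ`
exist only for `k ∈ C n`. -/
def Carrier (C : ℕ → Set ℕ) : Type :=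
  {e : Base // ∀ n k, e = Base.c n k → k ∈ C n}

noncomputable instance (C : ℕ → Set ℕ) : PartialOrder (Carrier C) :=
  Subtype.partialOrder _

namespace Stmt9Aux

variable {C : ℕ → Set ℕ}

/-- predicate defining the carrier -/
def Pred (C : ℕ → Set ℕ) (e : Base) : Prop := ∀ n k, e = Base.c n k → k ∈ C n

lemma pred_bot : Pred C .bot := fun _ _ h => nomatch h
lemma pred_top : Pred C .top := fun _ _ h => nomatch h
lemma pred_a (n : ℕ) : Pred C (.a n) := fun _ _ h => nomatch h
lemma pred_b (n : ℕ) : Pred C (.b n) := fun _ _ h => nomatch h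
lemma pred_c {n k : ℕ} (h : k ∈ C n) : Pred C (.c n k) := by
  intro m l hl; cases hl; exact h

/-- supremum on names -/
def supB : Base → Base → Base
  | .bot, x => x
  | x, .bot => x
  | .top, _ => .top
  | _, .top => .top
  | .a n, .a m => if n = m then .a n else .top
  | .a n, .c m _ => if n = m then .a n else .top
  | .c m _, .a n => if n = m then .a n else .top
  | .b n, .b m => if n = m then .b n else .top
  | .b n, .c m _ => if n = m then .b n else .top
  | .c m _, .b n => if n = m then .b n else .top
  | .c n k, .c m l => if n = m then .c n (max k l) else .top
  | _, _ => .top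

set_option maxHeartbeats 1000000 in
lemma le_supB_left : ∀ u v, leB u (supB u v) := by
  intro u v
  cases u <;> cases v <;> simp only [supB] <;> (try split) <;>
    simp_all [leB]

set_option maxHeartbeats 1000000 in
lemma le_supB_right : ∀ u v, leB v (supB u v) := by
  intro u v
  cases u <;> cases v <;> simp only [supB] <;> (try split) <;>
    simp_all [leB]

set_option maxHeartbeats 1000000 in
lemma supB_le : ∀ u v w, leB u w → leB v w → leB (supB u v) w := by
  intro u v w hu hv
  cases u <;> cases v <;> cases w <;> simp only [supB] <;> (try split) <;>
    simp_all [leB] <;> omega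

lemma pred_supB {u v : Base} (hu : Pred C u) (hv : Pred C v) :
    Pred C (supB u v) := by
  intro n k h
  cases u <;> cases v
  all_goals try (
    simp only [supB] at h
    first
    | exact hu _ _ h
    | exact hv _ _ h
    | exact Base.noConfusion h
    | (split at h <;>
        first
        | exact hu _ _ h
        | exact hv _ _ h
        | exact Base.noConfusion h))
  case c.c n' k' m' l' =>
    simp only [supB] at h
    split at h
    · cases h
      rename_i hnm
      rcases le_total k' l' with hkl | hkl
      · rw [max_eq_right hkl]; exact hv _ _ (by rw [hnm])
      · rw [max_eq_left hkl]; exact hu _ _ rfl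
    · exact Base.noConfusion h

lemma exists_lub (u v : Carrier C) : ∃ s, IsLUB {u, v} s := by
  refine ⟨⟨supB u.1 v.1, pred_supB u.2 v.2⟩, ?_, ?_⟩
  · intro x hx
    rcases hx with rfl | rfl
    · exact le_supB_left _ _
    · exact le_supB_right _ _
  · intro w hw
    exact supB_le u.1 v.1 w.1 (hw (Set.mem_insert _ _))
      (hw (Set.mem_insert_of_mem _ rfl))

/-- infimum on names, parameterized by the designated inf of `aₙ, bₙ`. -/
def infB (f : ℕ → Base) : Base → Base → Base
  | .bot, _ => .bot
  | _, .bot => .bot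
  | .top, x => x
  | x, .top => x
  | .a n, .a m => if n = m then .a n else .bot
  | .a n, .b m => if n = m then f n else .bot
  | .b n, .a m => if n = m then f n else .bot
  | .b n, .b m => if n = m then .b n else .bot
  | .a n, .c m l => if n = m then .c m l else .bot
  | .c m l, .a n => if n = m then .c m l else .bot
  | .b n, .c m l => if n = m then .c m l else .bot
  | .c m l, .b n => if n = m then .c m l else .bot
  | .c n k, .c m l => if n = m then .c n (min k l) else .bot

variable {f : ℕ → Base}

set_option maxHeartbeats 1000000 in
lemma infB_le_left (hf : ∀ n, leB (f n) (.a n) ∧ leB (f n) (.b n)) :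
    ∀ u v, leB (infB f u v) u := by
  intro u v
  cases u <;> cases v <;> simp only [infB] <;> (try split) <;>
    first
    | exact (hf _).1
    | (rename_i h; rw [h]; exact (hf _).1)
    | simp_all [leB]

set_option maxHeartbeats 1000000 in
lemma infB_le_right (hf : ∀ n, leB (f n) (.a n) ∧ leB (f n) (.b n)) :
    ∀ u v, leB (infB f u v) v := by
  intro u v
  cases u <;> cases v <;> simp only [infB] <;> (try split) <;>
    first
    | exact (hf _).2
    | (rename_i h; rw [h]; exact (hf _).2)
    | simp_all [leB]

set_option maxHeartbeats 1000000 in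
lemma le_infB (hf : ∀ n w, Pred C w → leB w (.a n) → leB w (.b n) → leB w (f n)) :
    ∀ u v w, Pred C w → leB w u → leB w v → leB w (infB f u v) := by
  intro u v w hwp hu hv
  cases u <;> cases v <;> cases w <;> simp only [infB] <;> (try split) <;>
    first
    | exact hf _ _ hwp hu hv
    | exact hf _ _ hwp hv hu
    | (rename_i h; subst h
       first
       | exact hf _ _ hwp hu hv
       | exact hf _ _ hwp hv hu)
    | (simp only [leB] at hu hv ⊢ <;>
       first
       | trivial
       | exact hu.elim
       | exact hv.elim
       | omega)

lemma pred_infB (hf : ∀ n, Pred C (f n)) {u v : Base}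
    (hu : Pred C u) (hv : Pred C v) : Pred C (infB f u v) := by
  intro n k h
  cases u <;> cases v
  all_goals try (
    simp only [infB] at h
    first
    | exact hu _ _ h
    | exact hv _ _ h
    | exact hf _ _ _ h
    | exact Base.noConfusion h
    | (split at h <;>
        first
        | exact hu _ _ h
        | exact hv _ _ h
        | exact hf _ _ _ h
        | exact Base.noConfusion h))
  case c.c n' k' m' l' =>
    simp only [infB] at h
    split at h
    · cases h
      rename_i hnm
      rcases le_total k' l' with hkl | hkl
      · rw [min_eq_left hkl]; exact hu _ _ rfl
      · rw [min_eq_right hkl]; exact hv _ _ (by rw [hnm])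
    · exact Base.noConfusion h

end Stmt9Aux

open Stmt9Aux in
/-- `P` is a lattice (every pair has a least upper bound and a greatest
lower bound) iff every `C n` is finite. -/
theorem stmt_9 (C : ℕ → Set ℕ) :
    (∀ u v : Carrier C, (∃ s, IsLUB {u, v} s) ∧ (∃ i, IsGLB {u, v} i)) ↔
      ∀ n, (C n).Finite := by
  constructor
  · intro h n
    obtain ⟨-, i, hi⟩ := h ⟨.a n, pred_a n⟩ ⟨.b n, pred_b n⟩
    obtain ⟨e, hp⟩ := i
    have hia : leB e (.a n) := hi.1 (Set.mem_insert _ _)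
    have hib : leB e (.b n) := hi.1 (Set.mem_insert_of_mem _ rfl)
    have hlow : ∀ k ∈ C n, leB (.c n k) e := by
      intro k hk
      have hc : (⟨.c n k, pred_c hk⟩ : Carrier C) ∈
          lowerBounds {(⟨.a n, pred_a n⟩ : Carrier C), ⟨.b n, pred_b n⟩} := by
        intro x hx
        rcases hx with rfl | rfl
        · show leB (.c n k) (.a n); simp [leB]
        · show leB (.c n k) (.b n); simp [leB]
      exact hi.2 hc
    cases e with
    | bot =>
      have : C n = ∅ := by
        by_contra hne
        obtain ⟨k, hk⟩ := Set.nonempty_iff_ne_empty.2 hne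
        exact hlow k hk
      simp [this]
    | top => exact hia.elim
    | a m => exact hib.elim
    | b m => exact hia.elim
    | c m l =>
      refine (Set.finite_Iic l).subset fun k hk => ?_
      exact (hlow k hk).2
  · intro hfin
    classical
    set f : ℕ → Base := fun n =>
      if h : (C n).Nonempty then .c n (sSup (C n)) else .bot with hf_def
    have hf1 : ∀ n, leB (f n) (.a n) ∧ leB (f n) (.b n) := by
      intro n
      simp only [hf_def]
      split <;> simp [leB]
    have hf2 : ∀ n, Pred C (f n) := by
      intro n
      simp only [hf_def]
      split
      · rename_i h
        exact pred_c (Nat.sSup_mem h (hfin n).bddAbove)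
      · exact pred_bot
    have hf3 : ∀ n w, Pred C w → leB w (.a n) → leB w (.b n) → leB w (f n) := by
      intro n w hwp hwa hwb
      cases w with
      | bot => simp [leB]
      | top => exact hwa.elim
      | a m =>
        exfalso
        simp only [leB] at hwa
        subst hwa
        exact hwb
      | b m => exact hwa.elim
      | c m k =>
        simp only [leB] at hwa
        subst hwa
        have hk : k ∈ C m := hwp m k rfl
        simp only [hf_def]
        split
        · exact ⟨rfl, le_csSup (hfin m).bddAbove hk⟩
        · rename_i hne; exact absurd ⟨k, hk⟩ hne
    intro u v
    refine ⟨exists_lub u v, ⟨⟨infB f u.1 v.1, pred_infB hf2 u.2 v.2⟩, ?_, ?_⟩⟩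
    · intro x hx
      rcases hx with rfl | rfl
      · exact infB_le_left hf1 _ _
      · exact infB_le_right hf1 _ _
    · intro w hw
      exact le_infB hf3 u.1 v.1 w.1 w.2 (hw (Set.mem_insert _ _))
        (hw (Set.mem_insert_of_mem _ rfl))
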